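/- arXiv:2412.03408 — 8 statements merged into one kernel-verified Lean document; each statement's English description precedes it below -/
import Mathlib

section
/- The map N ↦ N^{gp} is a bijection between admissible submonoids of ℚⁿ₍≥0₎ and admissible subgroups of ℚⁿ, with inverse G ↦ G ∩ ℚⁿ₍≥0₎. -/
/-- `N ⊆ ℚⁿ₍≥0₎` is an admissible submonoid: finitely generated, all entries nonnegative,
contains `ℕⁿ`, and saturated. -/
def IsAdmissibleAddSubmonoid {ι : Type} (N : AddSubmonoid (ι → ℚ)) : Prop :=
  N.FG ∧ (∀ x ∈ N, ∀ i, 0 ≤ x i) ∧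
    (∀ v : ι → ℕ, (fun i => (v i : ℚ)) ∈ N) ∧
    (∀ x : ι → ℚ, x ∈ AddSubgroup.closure (N : Set (ι → ℚ)) →
      ∀ m : ℕ, 0 < m → m • x ∈ N → x ∈ N)

/-- `G ⊆ ℚⁿ` is an admissible subgroup: finitely generated and contains `ℤⁿ`. -/
def IsAdmissibleAddSubgroup {ι : Type} (G : AddSubgroup (ι → ℚ)) : Prop :=
  G.FG ∧ ∀ v : ι → ℤ, (fun i => (v i : ℚ)) ∈ G

private def denomSG (n : ℕ) (d : ℕ) : AddSubgroup (Fin n → ℚ) where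
  carrier := {x | ∀ i, ∃ k : ℤ, (d : ℚ) * x i = (k : ℚ)}
  zero_mem' := fun i => ⟨0, by simp⟩
  add_mem' := by
    rintro x y hx hy i
    obtain ⟨k, hk⟩ := hx i; obtain ⟨l, hl⟩ := hy i
    exact ⟨k + l, by rw [Pi.add_apply, mul_add, hk, hl]; push_cast; ring⟩
  neg_mem' := by
    rintro x hx i
    obtain ⟨k, hk⟩ := hx i
    exact ⟨-k, by rw [Pi.neg_apply, mul_neg, hk]; push_cast; ring⟩

private lemma exists_denom {n : ℕ} (G : AddSubgroup (Fin n → ℚ)) (hG : G.FG) :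
    ∃ d : ℕ, 0 < d ∧ ∀ x ∈ G, ∀ i, ∃ k : ℤ, (d : ℚ) * x i = (k : ℚ) := by
  obtain ⟨F, hF⟩ := hG
  refine ⟨∏ g ∈ F, ∏ i, (g i).den, ?_, ?_⟩
  · exact Finset.prod_pos fun g _ => Finset.prod_pos fun i _ => (g i).den_pos
  · intro x hx i
    rw [← hF] at hx
    have hsub : (F : Set (Fin n → ℚ)) ⊆ (denomSG n (∏ g ∈ F, ∏ i, (g i).den) : Set _) := by
      intro g hg j
      have hdvd : (g j).den ∣ ∏ g ∈ F, ∏ i, (g i).den :=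
        dvd_trans (Finset.dvd_prod_of_mem (fun i => (g i).den) (Finset.mem_univ j))
          (Finset.dvd_prod_of_mem (fun g => ∏ i, (g i).den) hg)
      obtain ⟨c, hc⟩ := hdvd
      refine ⟨c * (g j).num, ?_⟩
      have h1 : g j * ((g j).den : ℚ) = ((g j).num : ℚ) := Rat.mul_den_eq_num _
      rw [hc]
      push_cast
      linear_combination (c : ℚ) * h1
    exact (AddSubgroup.closure_le _).2 hsub hx i

private lemma finite_box {n d : ℕ} (hd : 0 < d) :
    {x : Fin n → ℚ | (∀ i, ∃ k : ℤ, (d : ℚ) * x i = (k : ℚ)) ∧ ∀ i, 0 ≤ x i ∧ x i ≤ 1}.Finite := by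
  have hd' : (0 : ℚ) < d := by exact_mod_cast hd
  have hT : {q : ℚ | (∃ k : ℤ, (d : ℚ) * q = (k : ℚ)) ∧ 0 ≤ q ∧ q ≤ 1}.Finite := by
    apply Set.Finite.subset (Set.Finite.image (fun k : ℤ => (k : ℚ) / d)
      (Set.finite_Icc (0 : ℤ) (d : ℤ)))
    rintro q ⟨⟨k, hk⟩, h0, h1⟩
    refine ⟨k, ⟨?_, ?_⟩, ?_⟩
    · have : (0 : ℚ) ≤ (k : ℚ) := hk ▸ mul_nonneg hd'.le h0
      exact_mod_cast this
    · have : (k : ℚ) ≤ (d : ℚ) := by rw [← hk]; nlinarith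
      exact_mod_cast this
    · show (k : ℚ) / d = q
      rw [← hk, mul_div_cancel_left₀ _ hd'.ne']
  apply Set.Finite.subset (Set.Finite.pi (fun _ : Fin n => hT))
  rintro x ⟨h1, h2⟩
  rw [Set.mem_univ_pi]
  exact fun i => ⟨h1 i, h2 i⟩

private lemma natvec_mem {n : ℕ} {S : Set (Fin n → ℚ)}
    (h : ∀ i : Fin n, Pi.single i (1 : ℚ) ∈ S) (v : Fin n → ℕ) :
    (fun i => (v i : ℚ)) ∈ AddSubmonoid.closure S := by
  have key : (fun i => (v i : ℚ)) = ∑ i, (Pi.single i ((v i : ℚ)) : Fin n → ℚ) :=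
    (Finset.univ_sum_single _).symm
  rw [key]
  refine sum_mem fun i _ => ?_
  generalize v i = c
  induction c with
  | zero => simpa using AddSubmonoid.zero_mem _
  | succ c ih =>
    have : (Pi.single i ((c + 1 : ℕ) : ℚ) : Fin n → ℚ)
        = Pi.single i ((c : ℕ) : ℚ) + Pi.single i (1 : ℚ) := by
      rw [← Pi.single_add]
      push_cast
      ring_nf
    rw [this]
    exact add_mem ih (AddSubmonoid.subset_closure (h i))

/-- The map `N ↦ N^{gp}` is a bijection between admissible submonoids of `ℚⁿ₍≥0₎`
and admissible subgroups of `ℚⁿ`, with inverse `G ↦ G ∩ ℚⁿ₍≥0₎`. -/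
theorem admissible_monoid_group_bijection (n : ℕ) :
    (∀ N : AddSubmonoid (Fin n → ℚ), IsAdmissibleAddSubmonoid N →
      IsAdmissibleAddSubgroup (AddSubgroup.closure (N : Set (Fin n → ℚ))) ∧
      (∀ x : Fin n → ℚ, x ∈ N ↔
        (x ∈ AddSubgroup.closure (N : Set (Fin n → ℚ)) ∧ ∀ i, 0 ≤ x i))) ∧
    (∀ G : AddSubgroup (Fin n → ℚ), IsAdmissibleAddSubgroup G →
      ∃ N : AddSubmonoid (Fin n → ℚ), IsAdmissibleAddSubmonoid N ∧
        (∀ x : Fin n → ℚ, x ∈ N ↔ (x ∈ G ∧ ∀ i, 0 ≤ x i)) ∧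
        AddSubgroup.closure (N : Set (Fin n → ℚ)) = G) := by
  constructor
  · -- part 1
    intro N hN
    obtain ⟨hFG, hpos, hnat, hsat⟩ := hN
    refine ⟨⟨?_, ?_⟩, ?_⟩
    · -- FG
      obtain ⟨F, hF⟩ := hFG
      refine ⟨F, le_antisymm ?_ ?_⟩
      · refine (AddSubgroup.closure_le _).2 (fun g hg => AddSubgroup.subset_closure ?_)
        exact hF ▸ AddSubmonoid.subset_closure hg
      · refine (AddSubgroup.closure_le _).2 ?_
        intro x hx
        rw [← hF] at hx
        have hle : AddSubmonoid.closure (F : Set (Fin n → ℚ)) ≤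
            (AddSubgroup.closure (F : Set (Fin n → ℚ))).toAddSubmonoid :=
          AddSubmonoid.closure_le.2 AddSubgroup.subset_closure
        exact hle hx
    · -- contains ℤⁿ
      intro v
      have hkey : (fun i => (v i : ℚ)) =
          (fun i => (((v i).toNat : ℕ) : ℚ)) - (fun i => ((((-(v i)).toNat : ℕ)) : ℚ)) := by
        funext i
        have h := Int.toNat_sub_toNat_neg (v i)
        rw [Pi.sub_apply]
        exact_mod_cast h.symm
      rw [hkey]
      exact sub_mem (AddSubgroup.subset_closure (hnat _)) (AddSubgroup.subset_closure (hnat _))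
    · -- membership iff
      intro x
      refine ⟨fun hx => ⟨AddSubgroup.subset_closure hx, hpos x hx⟩, ?_⟩
      rintro ⟨hxg, hx0⟩
      have hmpos : 0 < ∏ i, (x i).den := Finset.prod_pos fun i _ => (x i).den_pos
      set m : ℕ := ∏ i, (x i).den with hm
      have hk : ∀ i, ∃ k : ℤ, (m : ℚ) * x i = (k : ℚ) ∧ 0 ≤ k := by
        intro i
        obtain ⟨c, hc⟩ := Finset.dvd_prod_of_mem (fun i => (x i).den) (Finset.mem_univ i)
        have h1 : x i * ((x i).den : ℚ) = ((x i).num : ℚ) := Rat.mul_den_eq_num _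
        refine ⟨c * (x i).num, ?_, ?_⟩
        · rw [hm, hc]; push_cast; linear_combination (c : ℚ) * h1
        · have h2 : (0 : ℚ) ≤ ((c * (x i).num : ℤ) : ℚ) := by
            have : ((c * (x i).num : ℤ) : ℚ) = (m : ℚ) * x i := by
              rw [hm, hc]; push_cast; linear_combination (-(c : ℚ)) * h1
            rw [this]
            exact mul_nonneg (by positivity) (hx0 i)
          exact_mod_cast h2
      choose k hk1 hk2 using hk
      have hmx : m • x = fun i => (((k i).toNat : ℕ) : ℚ) := by
        funext i
        rw [Pi.smul_apply, nsmul_eq_mul, hk1 i]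
        exact_mod_cast (Int.toNat_of_nonneg (hk2 i)).symm
      exact hsat x hxg m hmpos (by rw [hmx]; exact hnat _)
  · -- part 2
    intro G hG
    obtain ⟨hFG, hint⟩ := hG
    obtain ⟨d, hd, hden⟩ := exists_denom G hFG
    set N : AddSubmonoid (Fin n → ℚ) :=
      { carrier := {x | x ∈ G ∧ ∀ i, 0 ≤ x i}
        zero_mem' := ⟨zero_mem G, fun i => le_refl 0⟩
        add_mem' := fun hx hy => ⟨add_mem hx.1 hy.1, fun i => add_nonneg (hx.2 i) (hy.2 i)⟩ }
      with hNdef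
    have hmemN : ∀ x : Fin n → ℚ, x ∈ N ↔ (x ∈ G ∧ ∀ i, 0 ≤ x i) := fun _ => Iff.rfl
    set S : Set (Fin n → ℚ) := {x | x ∈ G ∧ ∀ i, 0 ≤ x i ∧ x i ≤ 1} with hSdef
    have hSfin : S.Finite := by
      apply Set.Finite.subset (finite_box (n := n) hd)
      rintro x ⟨hxG, hx⟩
      exact ⟨fun i => hden x hxG i, hx⟩
    have hsingle : ∀ i : Fin n, Pi.single i (1 : ℚ) ∈ S := by
      intro i
      constructor
      · have := hint (Pi.single i (1 : ℤ))
        have he : (fun j => (((Pi.single i (1 : ℤ) : Fin n → ℤ) j : ℤ) : ℚ))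
            = Pi.single i (1 : ℚ) := by
          funext j
          simp [Pi.single_apply, apply_ite (fun z : ℤ => (z : ℚ))]
        rwa [he] at this
      · intro j
        rw [Pi.single_apply]
        split <;> norm_num
    have hnatN : ∀ v : Fin n → ℕ, (fun i => (v i : ℚ)) ∈ N := by
      intro v
      constructor
      · have := hint (fun i => (v i : ℤ))
        have he : (fun i => ((v i : ℤ) : ℚ)) = fun i => ((v i : ℕ) : ℚ) := by
          funext i; push_cast; ring
        rwa [he] at this
      · intro i; positivity
    have key : AddSubmonoid.closure S = N := by
      apply le_antisymm
      · exact AddSubmonoid.closure_le.2 fun x hx => ⟨hx.1, fun i => (hx.2 i).1⟩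
      · intro x hx
        obtain ⟨hxG, hx0⟩ := hx
        have hf : (fun i => Int.fract (x i)) ∈ S := by
          constructor
          · have : (fun i => Int.fract (x i)) = x - fun i => ((⌊x i⌋ : ℤ) : ℚ) := by
              funext i
              rw [Pi.sub_apply, Int.fract]
            rw [this]
            exact sub_mem hxG (hint _)
          · exact fun i => ⟨Int.fract_nonneg _, (Int.fract_lt_one _).le⟩
        have hb : (fun i => ((⌊x i⌋ : ℤ) : ℚ)) ∈ AddSubmonoid.closure S := by
          have he : (fun i => ((⌊x i⌋ : ℤ) : ℚ)) = fun i => ((⌊x i⌋.toNat : ℕ) : ℚ) := by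
            funext i
            exact_mod_cast (Int.toNat_of_nonneg (Int.floor_nonneg.2 (hx0 i))).symm
          rw [he]
          exact natvec_mem hsingle _
        have hxeq : x = (fun i => Int.fract (x i)) + fun i => ((⌊x i⌋ : ℤ) : ℚ) := by
          funext i
          rw [Pi.add_apply, Int.fract]
          ring
        rw [hxeq]
        exact add_mem (AddSubmonoid.subset_closure hf) hb
    refine ⟨N, ⟨?_, ?_, hnatN, ?_⟩, hmemN, ?_⟩
    · -- FG
      exact (AddSubmonoid.fg_iff N).2 ⟨S, key, hSfin⟩
    · -- nonneg
      exact fun x hx i => hx.2 i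
    · -- saturated
      intro x hx m hm hmx
      have hNG : AddSubgroup.closure (N : Set (Fin n → ℚ)) ≤ G :=
        (AddSubgroup.closure_le G).2 fun y hy => hy.1
      refine ⟨hNG hx, fun i => ?_⟩
      have h1 : (0 : ℚ) ≤ (m : ℚ) * x i := by
        have := hmx.2 i
        rwa [Pi.smul_apply, nsmul_eq_mul] at this
      have hm' : (0 : ℚ) < m := by exact_mod_cast hm
      nlinarith
    · -- closure N = G
      apply le_antisymm
      · exact (AddSubgroup.closure_le G).2 fun y hy => hy.1
      · intro g hg
        set w : Fin n → ℕ := fun i => (⌈-g i⌉).toNat with hw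
        have hwN : (fun i => (w i : ℚ)) ∈ N := hnatN w
        have hgwN : (g + fun i => (w i : ℚ)) ∈ N := by
          constructor
          · exact add_mem hg hwN.1
          · intro i
            rw [Pi.add_apply]
            have h1 : -g i ≤ ((⌈-g i⌉ : ℤ) : ℚ) := Int.le_ceil _
            have h2 : ((⌈-g i⌉ : ℤ) : ℚ) ≤ ((w i : ℕ) : ℚ) := by
              rw [hw]; exact_mod_cast Int.self_le_toNat _
            linarith
        have : g = (g + fun i => (w i : ℚ)) - fun i => (w i : ℚ) := by ring
        rw [this]
        exact sub_mem (AddSubgroup.subset_closure hgwN) (AddSubgroup.subset_closure hwN)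
end

section
/- Every admissible submonoid of ℚ₍≥0₎ (n = 1 case) is of the form (1/m)ℕ for some positive integer m. -/
/-- Every admissible submonoid of `ℚ₍≥0₎` (finitely generated, saturated, containing `ℕ`)
is of the form `(1/m)ℕ` for some positive integer `m`. -/
theorem admissible_submonoid_rank_one
    (N : AddSubmonoid ℚ) (hFG : N.FG)
    (hpos : ∀ x ∈ N, 0 ≤ x)
    (hNat : ∀ k : ℕ, (k : ℚ) ∈ N)
    (hsat : ∀ x : ℚ, x ∈ AddSubgroup.closure (N : Set ℚ) →
      ∀ m : ℕ, 0 < m → m • x ∈ N → x ∈ N) :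
    ∃ m : ℕ, 0 < m ∧ ∀ x : ℚ, x ∈ N ↔ ∃ k : ℕ, x = (k : ℚ) / m := by
  classical
  obtain ⟨S, hS⟩ := hFG
  set m : ℕ := ∏ s ∈ S, s.den with hm
  have hm_pos : 0 < m := Finset.prod_pos (fun s _ => s.pos)
  have hm0 : (m : ℚ) ≠ 0 := by positivity
  set H : AddSubgroup ℚ := AddSubgroup.closure (N : Set ℚ) with hH
  -- every element of N is z/m
  have hNint : ∀ x ∈ N, ∃ z : ℤ, x = (z : ℚ) / m := by
    intro x hx
    rw [← hS] at hx
    induction hx using AddSubmonoid.closure_induction with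
    | mem s hs =>
        obtain ⟨t, ht⟩ : s.den ∣ m := Finset.dvd_prod_of_mem _ hs
        refine ⟨s.num * t, ?_⟩
        have ht0 : (t : ℚ) ≠ 0 := by
          rintro h
          norm_cast at h
          simp [h] at ht
          omega
        rw [ht]
        push_cast
        rw [mul_div_mul_right _ _ ht0, Rat.num_div_den]
    | zero => exact ⟨0, by simp⟩
    | add a b _ _ ha hb =>
        obtain ⟨z1, hz1⟩ := ha
        obtain ⟨z2, hz2⟩ := hb
        exact ⟨z1 + z2, by rw [hz1, hz2]; push_cast; rw [← add_div]⟩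
  have hHint : ∀ x ∈ H, ∃ z : ℤ, x = (z : ℚ) / m := by
    intro x hx
    induction hx using AddSubgroup.closure_induction with
    | mem s hs => exact hNint s hs
    | zero => exact ⟨0, by simp⟩
    | add a b _ _ ha hb =>
        obtain ⟨z1, hz1⟩ := ha
        obtain ⟨z2, hz2⟩ := hb
        exact ⟨z1 + z2, by rw [hz1, hz2]; push_cast; rw [← add_div]⟩
    | neg a _ ha =>
        obtain ⟨z, hz⟩ := ha
        exact ⟨-z, by rw [hz]; push_cast; ring⟩
  -- the subgroup of integers z with z/m ∈ H
  let φ : ℤ →+ ℚ := (AddMonoidHom.mulRight ((m : ℚ))⁻¹).comp (Int.castAddHom ℚ)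
  have hφ : ∀ z : ℤ, φ z = (z : ℚ) / m := fun z => by
    simp [φ, div_eq_mul_inv]
  set J : AddSubgroup ℤ := H.comap φ with hJ
  have hmemJ : ∀ z : ℤ, z ∈ J ↔ (z : ℚ) / m ∈ H := fun z => by
    rw [hJ, AddSubgroup.mem_comap, hφ]
  obtain ⟨g, hg⟩ := Int.subgroup_cyclic J
  have hmJ : (m : ℤ) ∈ J := by
    rw [hmemJ]
    push_cast
    rw [div_self hm0]
    exact AddSubgroup.subset_closure (hNat 1 : (((1:ℕ) : ℚ)) ∈ N)
  have hgm : g ∣ (m : ℤ) := by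
    rw [hg, AddSubgroup.mem_closure_singleton] at hmJ
    obtain ⟨n, hn⟩ := hmJ
    exact Dvd.intro_left n (by rw [← hn]; simp [zsmul_eq_mul])
  set d : ℕ := g.natAbs with hd
  have hdm : d ∣ m := Int.ofNat_dvd.mp (by rwa [Int.natAbs_dvd])
  have hd_pos : 0 < d := by
    rcases Nat.eq_zero_or_pos d with h | h
    · exfalso
      have : g = 0 := Int.natAbs_eq_zero.mp h
      rw [this] at hgm
      simp at hgm
      omega
    · exact h
  obtain ⟨k, hk⟩ := hdm
  have hk_pos : 0 < k := by
    rcases Nat.eq_zero_or_pos k with h | h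
    · exfalso; rw [h, mul_zero] at hk; omega
    · exact h
  have hdQ : (d : ℚ) ≠ 0 := by positivity
  have hkQ : (k : ℚ) ≠ 0 := by positivity
  have hmdk : (m : ℚ) = (d : ℚ) * k := by exact_mod_cast congrArg (Nat.cast : ℕ → ℚ) hk
  have hdJ : (d : ℤ) ∈ J := by
    rw [hg, AddSubgroup.mem_closure_singleton]
    rcases Int.natAbs_eq g with h | h
    · exact ⟨1, by rw [one_smul]; omega⟩
    · exact ⟨-1, by simp; omega⟩
  have h1k : (1 : ℚ) / k ∈ H := by
    have := (hmemJ _).mp hdJ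
    have heq : ((d : ℤ) : ℚ) / m = 1 / k := by
      push_cast
      rw [hmdk]
      field_simp
    rwa [heq] at this
  refine ⟨k, hk_pos, fun x => ⟨fun hx => ?_, fun ⟨j, hj⟩ => ?_⟩⟩
  · -- forward
    have hxH : x ∈ H := AddSubgroup.subset_closure hx
    obtain ⟨z, hz⟩ := hHint x hxH
    have hzJ : z ∈ J := by
      rw [hmemJ, ← hz]; exact hxH
    have hgz : g ∣ z := by
      rw [hg, AddSubgroup.mem_closure_singleton] at hzJ
      obtain ⟨n, hn⟩ := hzJ
      exact Dvd.intro_left n (by rw [← hn]; simp [zsmul_eq_mul])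
    obtain ⟨t, ht⟩ : (d : ℤ) ∣ z := Int.natAbs_dvd.mpr hgz
    have hz0 : 0 ≤ z := by
      by_contra h
      push_neg at h
      have : x < 0 := by
        rw [hz]
        apply div_neg_of_neg_of_pos
        · exact_mod_cast h
        · positivity
      exact absurd (hpos x hx) (not_le.mpr this)
    have ht0 : 0 ≤ t := by
      by_contra h
      push_neg at h
      nlinarith [ht, hd_pos]
    refine ⟨t.toNat, ?_⟩
    rw [hz, ht, hmdk]
    have hc : ((t.toNat : ℕ) : ℚ) = (t : ℚ) := by exact_mod_cast Int.toNat_of_nonneg ht0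
    push_cast
    rw [hc]; field_simp
  · -- backward
    have hxH : x ∈ H := by
      rw [hj]
      have : (j : ℚ) / k = j • ((1:ℚ)/k) := by
        rw [nsmul_eq_mul]; ring
      rw [this]
      exact AddSubgroup.nsmul_mem H h1k j
    refine hsat x hxH k hk_pos ?_
    have : k • x = (j : ℚ) := by
      rw [hj, nsmul_eq_mul]
      field_simp
    rw [this]
    exact hNat j
end

section
/- Let G ⊆ ℚ² be the admissible subgroup generated by ℤ², (1/2, 0) and (0, 1/2), and let I = {1}. Then the pushout ℤ^I ⊕_{ℤ²} G in the category of abelian groups is isomorphic to ℤ × ℤ/2ℤ (in particular has torsion), while the image G^I of G under the projection ℚ² → ℚ equals (1/2)ℤ; hence the natural map from the pushout to G^I is not an isomorphism. -/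
/-- `(1/2, 0) ∈ ℚ²`. -/
def halfE1 : Fin 2 → ℚ := fun i => if i = 0 then 1/2 else 0

/-- `(0, 1/2) ∈ ℚ²`. -/
def halfE2 : Fin 2 → ℚ := fun i => if i = 0 then 0 else 1/2

/-- The admissible subgroup `G ⊆ ℚ²` generated by `ℤ²`, `(1/2,0)` and `(0,1/2)`. -/
def Gex : AddSubgroup (Fin 2 → ℚ) :=
  AddSubgroup.closure
    ({x | ∃ v : Fin 2 → ℤ, x = fun i => (v i : ℚ)} ∪ {halfE1, halfE2})

/-- The relations defining the pushout `ℤ^I ⊕_{ℤ²} G` (with `I = {1}`): the subgroup of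
`ℤ × G` generated by the elements `(v 0, -v)` for `v ∈ ℤ²`. -/
def RelEx : AddSubgroup (ℤ × ↥Gex) :=
  AddSubgroup.closure
    {p | ∃ v : Fin 2 → ℤ, p.1 = v 0 ∧ ((p.2 : Fin 2 → ℚ) = fun i => -(v i : ℚ))}

/-- The pushout `ℤ^I ⊕_{ℤ²} G` in the category of abelian groups. -/
abbrev PushoutEx := (ℤ × ↥Gex) ⧸ RelEx

lemma num_two_mul {q : ℚ} {k : ℤ} (h : q = (k : ℚ) / 2) : (2 * q).num = k := by
  rw [h]
  have h2 : (2 : ℚ) * ((k : ℚ) / 2) = (k : ℚ) := by ring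
  rw [h2, Rat.num_intCast]

lemma halfE1_mem : halfE1 ∈ Gex := AddSubgroup.subset_closure (Or.inr (Or.inl rfl))
lemma halfE2_mem : halfE2 ∈ Gex := AddSubgroup.subset_closure (Or.inr (Or.inr rfl))

lemma mem_Gex_iff (x : Fin 2 → ℚ) : x ∈ Gex ↔ ∀ i, ∃ k : ℤ, x i = (k : ℚ) / 2 := by
  constructor
  · intro hx
    induction hx using AddSubgroup.closure_induction with
    | mem x hx =>
      intro i
      rcases hx with ⟨v, rfl⟩ | rfl | rfl
      · exact ⟨2 * v i, by push_cast; ring⟩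
      · fin_cases i
        · exact ⟨1, by simp [halfE1]⟩
        · exact ⟨0, by simp [halfE1]⟩
      · fin_cases i
        · exact ⟨0, by simp [halfE2]⟩
        · exact ⟨1, by simp [halfE2]⟩
    | zero => exact fun i => ⟨0, by simp⟩
    | add x y hx hy ihx ihy =>
      intro i
      obtain ⟨a, ha⟩ := ihx i
      obtain ⟨b, hb⟩ := ihy i
      exact ⟨a + b, by push_cast [Pi.add_apply, ha, hb]; ring⟩
    | neg x hx ihx =>
      intro i
      obtain ⟨a, ha⟩ := ihx i
      exact ⟨-a, by push_cast [Pi.neg_apply, ha]; ring⟩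
  · intro h
    obtain ⟨a, ha⟩ := h 0
    obtain ⟨b, hb⟩ := h 1
    have hx : x = a • halfE1 + b • halfE2 := by
      funext i
      fin_cases i <;> simp [halfE1, halfE2, ha, hb] <;> ring
    rw [hx]
    exact add_mem (zsmul_mem halfE1_mem a) (zsmul_mem halfE2_mem b)

/-- The `j`-th coordinate, doubled, as an integer. -/
def numAt (j : Fin 2) : ↥Gex →+ ℤ where
  toFun g := (2 * (g : Fin 2 → ℚ) j).num
  map_zero' := by simp
  map_add' g h := by
    show (2 * ((g + h : ↥Gex) : Fin 2 → ℚ) j).num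
      = (2 * (g : Fin 2 → ℚ) j).num + (2 * (h : Fin 2 → ℚ) j).num
    obtain ⟨a, ha⟩ := (mem_Gex_iff _).mp g.2 j
    obtain ⟨b, hb⟩ := (mem_Gex_iff _).mp h.2 j
    have hab : ((g + h : ↥Gex) : Fin 2 → ℚ) j = ((a + b : ℤ) : ℚ) / 2 := by
      push_cast [AddSubgroup.coe_add, Pi.add_apply, ha, hb]; ring
    rw [num_two_mul ha, num_two_mul hb, num_two_mul hab]

lemma coord_eq (g : ↥Gex) (j : Fin 2) : (g : Fin 2 → ℚ) j = (numAt j g : ℚ) / 2 := by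
  obtain ⟨a, ha⟩ := (mem_Gex_iff _).mp g.2 j
  rw [show numAt j g = a from num_two_mul ha]
  exact ha

/-- The comparison map to `ℤ × ZMod 2`. -/
def phiEx : (ℤ × ↥Gex) →+ ℤ × ZMod 2 where
  toFun p := (2 * p.1 + numAt 0 p.2, ((numAt 1 p.2 : ℤ) : ZMod 2))
  map_zero' := by simp
  map_add' p q := by
    ext
    · simp [map_add]; ring
    · simp [map_add]

lemma relEx_eq_ker : RelEx = phiEx.ker := by
  apply le_antisymm
  · rw [RelEx, AddSubgroup.closure_le]
    rintro ⟨k, g⟩ ⟨v, h1, h2⟩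
    have h0 : (g : Fin 2 → ℚ) 0 = ((-2 * v 0 : ℤ) : ℚ) / 2 := by rw [h2]; push_cast; ring
    have h1' : (g : Fin 2 → ℚ) 1 = ((-2 * v 1 : ℤ) : ℚ) / 2 := by rw [h2]; push_cast; ring
    have : phiEx (k, g) = 0 := by
      show ((2 * k + numAt 0 g, ((numAt 1 g : ℤ) : ZMod 2)) : ℤ × ZMod 2) = 0
      rw [show numAt 0 g = -2 * v 0 from num_two_mul h0,
          show numAt 1 g = -2 * v 1 from num_two_mul h1', Prod.mk_eq_zero]
      constructor
      · rw [show k = v 0 from h1]; ring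
      · rw [ZMod.intCast_zmod_eq_zero_iff_dvd]
        exact ⟨-v 1, by ring⟩
    exact this
  · rintro ⟨k, g⟩ hp
    have hp' : phiEx (k, g) = 0 := hp
    rw [Prod.ext_iff] at hp'
    obtain ⟨hA, hB⟩ := hp'
    have hA : 2 * k + numAt 0 g = 0 := hA
    have hB : ((numAt 1 g : ℤ) : ZMod 2) = 0 := hB
    rw [ZMod.intCast_zmod_eq_zero_iff_dvd] at hB
    obtain ⟨c, hc⟩ := hB
    refine AddSubgroup.subset_closure ⟨fun i => if i = 0 then k else -c, rfl, ?_⟩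
    funext i
    fin_cases i
    · show (g : Fin 2 → ℚ) 0 = -(k : ℚ)
      rw [coord_eq, show numAt 0 g = -(2 * k) by omega]; push_cast; ring
    · show (g : Fin 2 → ℚ) 1 = -((-c : ℤ) : ℚ)
      rw [coord_eq, hc]; push_cast; ring

lemma phiEx_surj : Function.Surjective phiEx := by
  rintro ⟨m, c⟩
  have hmem : (fun i => if i = 0 then (m : ℚ) / 2 else ((c.val : ℤ) : ℚ) / 2) ∈ Gex := by
    rw [mem_Gex_iff]
    intro i
    fin_cases i
    · exact ⟨m, by simp⟩
    · exact ⟨(c.val : ℤ), by simp⟩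
  refine ⟨(0, ⟨_, hmem⟩), ?_⟩
  show ((2 * 0 + numAt 0 _, ((numAt 1 _ : ℤ) : ZMod 2)) : ℤ × ZMod 2) = (m, c)
  rw [show numAt 0 (⟨_, hmem⟩ : ↥Gex) = m from num_two_mul (by simp),
      show numAt 1 (⟨_, hmem⟩ : ↥Gex) = (c.val : ℤ) from num_two_mul (by simp)]
  refine Prod.ext (by ring) ?_
  show (((c.val : ℤ)) : ZMod 2) = c
  push_cast
  exact ZMod.natCast_rightInverse c

/-- With `G = ⟨ℤ², (1/2,0), (0,1/2)⟩ ⊆ ℚ²` and `I = {1}`: the pushout `ℤ^I ⊕_{ℤ²} G` is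
isomorphic to `ℤ × ℤ/2ℤ` (so has torsion), the image `G^I` of `G` under the first coordinate
projection is `(1/2)ℤ`, and the natural map from the pushout to `G^I ⊆ ℚ` is not injective,
hence not an isomorphism. -/
theorem pushout_vs_image_example :
    Nonempty (PushoutEx ≃+ ℤ × ZMod 2) ∧
    (∀ q : ℚ, (∃ g ∈ Gex, g 0 = q) ↔ ∃ k : ℤ, q = (k : ℚ) / 2) ∧
    (∀ f : PushoutEx →+ ℚ,
      (∀ (k : ℤ) (g : ↥Gex),
        f (QuotientAddGroup.mk (k, g)) = (k : ℚ) + (g : Fin 2 → ℚ) 0) →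
      ¬ Function.Injective f) := by
  refine ⟨?_, ?_, ?_⟩
  · exact ⟨(QuotientAddGroup.quotientAddEquivOfEq relEx_eq_ker).trans
      (QuotientAddGroup.quotientKerEquivOfSurjective phiEx phiEx_surj)⟩
  · intro q
    constructor
    · rintro ⟨g, hg, rfl⟩
      exact (mem_Gex_iff g).mp hg 0
    · rintro ⟨k, rfl⟩
      exact ⟨k • halfE1, zsmul_mem halfE1_mem k, by simp [halfE1]; ring⟩
  · intro f hf hinj
    set h2 : ↥Gex := ⟨halfE2, halfE2_mem⟩ with hh2
    have hf0 : f (QuotientAddGroup.mk (0, h2)) = 0 := by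
      rw [hf 0 h2]; simp [hh2, halfE2]
    have : (QuotientAddGroup.mk ((0 : ℤ), h2) : PushoutEx) = 0 :=
      hinj (hf0.trans (map_zero f).symm)
    rw [QuotientAddGroup.eq_zero_iff, relEx_eq_ker, AddMonoidHom.mem_ker] at this
    have h2nd : ((numAt 1 h2 : ℤ) : ZMod 2) = 0 := congrArg Prod.snd this
    rw [show numAt 1 h2 = 1 from num_two_mul (by simp [hh2, halfE2])] at h2nd
    simp at h2nd
end

section
/- Let G ⊆ ℚⁿ be an admissible subgroup and I ⊆ {1,…,n}. The natural map ℤ^I ⊕_{ℤⁿ} G → G^I (from the pushout of abelian groups to the image of G under projection) is surjective with kernel the torsion subgroup of ℤ^I ⊕_{ℤⁿ} G; equivalently, G^I is the pushout of ℤ^I ← ℤⁿ → G in the category of torsion-free abelian groups. -/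
/-- The coordinate projection `ℚⁿ → ℚ^I`, as an additive monoid homomorphism. -/
def projHom (n : ℕ) (I : Finset (Fin n)) : (Fin n → ℚ) →+ ({ i // i ∈ I } → ℚ) where
  toFun x := fun j => x j.1
  map_zero' := rfl
  map_add' _ _ := rfl

lemma den_dvd_int_mul (q : ℚ) (N : ℕ) (h : q.den ∣ N) : ∃ z : ℤ, (N : ℚ) * q = z := by
  obtain ⟨k, hk⟩ := h
  refine ⟨(k : ℤ) * q.num, ?_⟩
  rw [hk]
  push_cast
  rw [mul_comm ((q.den : ℚ)) (k : ℚ), mul_assoc, mul_comm ((q.den : ℚ)) q,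
    Rat.mul_den_eq_num]

lemma exists_den_bound (n : ℕ) (G : AddSubgroup (Fin n → ℚ)) (hfg : G.FG) :
    ∃ N : ℕ, 0 < N ∧ ∀ g ∈ G, ∀ i, ∃ z : ℤ, (N : ℚ) * g i = z := by
  obtain ⟨S, hS⟩ := hfg
  set N : ℕ := ∏ s ∈ S, ∏ i, (s i).den with hN
  refine ⟨N, ?_, ?_⟩
  · exact Finset.prod_pos fun s _ => Finset.prod_pos fun i _ => (s i).pos
  · set K : AddSubgroup (Fin n → ℚ) :=
      { carrier := {x | ∀ i, ∃ z : ℤ, (N : ℚ) * x i = z}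
        zero_mem' := fun i => ⟨0, by simp⟩
        add_mem' := by
          rintro x y hx hy i
          obtain ⟨a, ha⟩ := hx i
          obtain ⟨b, hb⟩ := hy i
          exact ⟨a + b, by push_cast [← ha, ← hb]; simp [mul_add]⟩
        neg_mem' := by
          rintro x hx i
          obtain ⟨a, ha⟩ := hx i
          exact ⟨-a, by push_cast [← ha]; simp⟩ } with hK
    have hle : G ≤ K := by
      rw [← hS, AddSubgroup.closure_le]
      intro s hs i
      refine den_dvd_int_mul _ _ ?_
      exact dvd_trans (Finset.dvd_prod_of_mem (fun i => (s i).den) (Finset.mem_univ i))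
        (Finset.dvd_prod_of_mem (fun s => ∏ i, (s i).den) hs)
    exact fun g hg => hle hg

/-- Let `G ⊆ ℚⁿ` be admissible and `I ⊆ {1,…,n}`.  Form the pushout
`ℤ^I ⊕_{ℤⁿ} G = (ℤ^I × G)/⟨(projection v, -v) : v ∈ ℤⁿ⟩` of abelian groups.  Then the
natural map from the pushout to `ℚ^I` (induced by the inclusion `ℤ^I → ℚ^I` and by the
projection `G → ℚ^I`) has image exactly `G^I` (so it is surjective onto `G^I`) and its
kernel is the torsion subgroup of the pushout; equivalently, `G^I` is the pushout of
`ℤ^I ← ℤⁿ → G` in the category of torsion-free abelian groups. -/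
theorem pushout_to_image_kernel_is_torsion
    (n : ℕ) (I : Finset (Fin n)) (G : AddSubgroup (Fin n → ℚ))
    (hG : IsAdmissibleAddSubgroup G)
    (Rel : AddSubgroup (({ i // i ∈ I } → ℤ) × ↥G))
    (hRel : Rel = AddSubgroup.closure
      {p | ∃ v : Fin n → ℤ, p.1 = (fun j => v j.1) ∧
        ((p.2 : Fin n → ℚ) = fun i => -(v i : ℚ))})
    (f : ((({ i // i ∈ I } → ℤ) × ↥G) ⧸ Rel) →+ ({ i // i ∈ I } → ℚ))
    (hf : ∀ (a : { i // i ∈ I } → ℤ) (g : ↥G),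
      f (QuotientAddGroup.mk (a, g)) =
        (fun j => (a j : ℚ)) + fun j => (g : Fin n → ℚ) j.1) :
    Set.range f = ((G.map (projHom n I) : AddSubgroup ({ i // i ∈ I } → ℚ)) :
      Set ({ i // i ∈ I } → ℚ)) ∧
    ∀ x, f x = 0 ↔ ∃ m : ℕ, 0 < m ∧ m • x = 0 := by
  obtain ⟨hfg, hZ⟩ := hG
  constructor
  · ext y
    simp only [Set.mem_range, SetLike.mem_coe, AddSubgroup.mem_map]
    constructor
    · rintro ⟨x, rfl⟩
      obtain ⟨⟨a, g⟩, rfl⟩ := QuotientAddGroup.mk_surjective x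
      rw [hf]
      set v : Fin n → ℤ := fun i => if h : i ∈ I then a ⟨i, h⟩ else 0 with hv
      refine ⟨(fun i => (v i : ℚ)) + g, G.add_mem (hZ v) g.2, ?_⟩
      funext j
      simp [projHom, v, j.2]
    · rintro ⟨g, hg, rfl⟩
      refine ⟨QuotientAddGroup.mk (0, ⟨g, hg⟩), ?_⟩
      rw [hf]
      funext j
      simp [projHom]
  · intro x
    constructor
    · intro hx
      obtain ⟨N, hNpos, hNint⟩ := exists_den_bound n G hfg
      obtain ⟨⟨a, g⟩, rfl⟩ := QuotientAddGroup.mk_surjective x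
      rw [hf] at hx
      have hx' : ∀ j : {i // i ∈ I}, (a j : ℚ) + (g : Fin n → ℚ) j.1 = 0 :=
        fun j => congrFun hx j
      choose z hz using hNint g g.2
      refine ⟨N, hNpos, ?_⟩
      have hmem : (N • (a, g) : ({ i // i ∈ I } → ℤ) × ↥G) ∈ Rel := by
        rw [hRel]
        apply AddSubgroup.subset_closure
        refine ⟨fun i => -z i, ?_, ?_⟩
        · funext j
          have h1 : (((N • a) j : ℤ) : ℚ) = ((-z j.1 : ℤ) : ℚ) := by
            have h2 := hx' j
            have h3 := hz j.1
            simp only [Pi.smul_apply, nsmul_eq_mul]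
            push_cast
            nlinarith [h2, h3]
          exact_mod_cast h1
        · funext i
          have h3 := hz i
          have h4 : ((N • g : ↥G) : Fin n → ℚ) i = (N : ℚ) * (g : Fin n → ℚ) i := by
            push_cast
            simp [nsmul_eq_mul]
          simp only [Prod.smul_mk, Prod.smul_snd, h4, h3]
          push_cast
          ring
      rw [← QuotientAddGroup.mk'_apply Rel, ← map_nsmul, QuotientAddGroup.mk'_apply]
      rwa [QuotientAddGroup.eq_zero_iff]
    · rintro ⟨m, hm, hmx⟩
      have h := congrArg f hmx
      rw [map_nsmul, map_zero] at h
      have h2 : (m : ℚ) • f x = 0 := by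
        rw [Nat.cast_smul_eq_nsmul]; exact h
      rcases smul_eq_zero.mp h2 with h' | h'
      · exact absurd h' (by positivity)
      · exact h'
end

section
/- Let N ⊆ ℚⁿ₍≥0₎ be an admissible submonoid. For each i ∈ {1,…,n}, the image N^{{i}} of N under the i-th coordinate projection is a free monoid of rank 1 (isomorphic to (1/mᵢ)ℕ for some positive integer mᵢ), and the induced map N → ⊕ᵢ N^{{i}} is injective, exhibiting ⊕ᵢ N^{{i}} as a free admissible submonoid of ℚⁿ₍≥0₎ containing N. -/
lemma den_mul_self_int (q : ℚ) : (q.den : ℚ) * q = q.num := by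
  have hden : (q.den : ℚ) ≠ 0 := Nat.cast_ne_zero.mpr q.den_nz
  nth_rewrite 2 [← Rat.num_div_den q]
  field_simp

lemma exists_int_of_den_dvd (q : ℚ) (d : ℕ) (h : q.den ∣ d) : ∃ z : ℤ, (d : ℚ) * q = z := by
  obtain ⟨c, hc⟩ := h
  refine ⟨q.num * c, ?_⟩
  subst hc
  push_cast
  rw [mul_comm (q.den : ℚ), mul_assoc, den_mul_self_int, mul_comm]

/-- For an admissible submonoid `N ⊆ ℚⁿ₍≥0₎`: each single-coordinate projection image
`N^{{i}}` equals `(1/mᵢ)ℕ` for some positive integer `mᵢ`, and the direct sum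
`⊕ᵢ N^{{i}} = {x | xᵢ ∈ (1/mᵢ)ℕ}` is a free admissible submonoid of `ℚⁿ₍≥0₎` containing `N`
(the induced map `N → ⊕ᵢ N^{{i}}` being the inclusion, in particular injective). -/
theorem canonical_free_admissible_envelope
    (n : ℕ) (N : AddSubmonoid (Fin n → ℚ)) (hN : IsAdmissibleAddSubmonoid N) :
    ∃ m : Fin n → ℕ, (∀ i, 0 < m i) ∧
      (∀ i : Fin n, ∀ q : ℚ, (∃ x ∈ N, x i = q) ↔ ∃ k : ℕ, q = (k : ℚ) / m i) ∧
      ∃ M : AddSubmonoid (Fin n → ℚ),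
        (M : Set (Fin n → ℚ)) = {x | ∀ i, ∃ k : ℕ, x i = (k : ℚ) / m i} ∧
        IsAdmissibleAddSubmonoid M ∧ N ≤ M := by
  obtain ⟨⟨S, hS⟩, hpos, hnat, hsat⟩ := hN
  -- common denominator
  set D : ℕ := ∏ a ∈ S, ∏ i, (a i).den with hDdef
  have hDpos : 0 < D := Finset.prod_pos fun a _ => Finset.prod_pos fun i _ => (a i).pos
  have hDQ : (D : ℚ) ≠ 0 := Nat.cast_ne_zero.mpr hDpos.ne'
  -- the subgroup of vectors with D-integral coordinates
  set K : AddSubgroup (Fin n → ℚ) :=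
    { carrier := {x | ∀ i, ∃ z : ℤ, (D : ℚ) * x i = z}
      zero_mem' := fun i => ⟨0, by simp⟩
      add_mem' := by
        rintro a b ha hb i
        obtain ⟨za, hza⟩ := ha i
        obtain ⟨zb, hzb⟩ := hb i
        exact ⟨za + zb, by rw [Pi.add_apply, mul_add, hza, hzb]; push_cast; ring⟩
      neg_mem' := by
        rintro a ha i
        obtain ⟨z, hz⟩ := ha i
        exact ⟨-z, by rw [Pi.neg_apply, mul_neg, hz]; push_cast; ring⟩ } with hKdef
  have hNK : ∀ x ∈ N, ∀ i, ∃ z : ℤ, (D : ℚ) * x i = z := by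
    intro x hx
    have : N ≤ K.toAddSubmonoid := by
      rw [← hS]
      apply AddSubmonoid.closure_le.mpr
      intro a ha i
      refine exists_int_of_den_dvd _ _ ?_
      exact dvd_trans (Finset.dvd_prod_of_mem (fun j => (a j).den) (Finset.mem_univ i))
        (Finset.dvd_prod_of_mem (fun b => ∏ j, (b j).den) ha)
    exact this hx
  have hGK : ∀ x ∈ AddSubgroup.closure (N : Set (Fin n → ℚ)), ∀ i, ∃ z : ℤ, (D : ℚ) * x i = z := by
    intro x hx
    exact (AddSubgroup.closure_le K).mpr (fun a ha => hNK a ha) hx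
  -- key: nonneg elements of the group closure are in N
  have L1 : ∀ x : Fin n → ℚ, x ∈ AddSubgroup.closure (N : Set (Fin n → ℚ)) →
      (∀ i, 0 ≤ x i) → x ∈ N := by
    intro x hx hx0
    refine hsat x hx D hDpos ?_
    choose z hz using hGK x hx
    have hz0 : ∀ i, 0 ≤ z i := by
      intro i
      have : (0 : ℚ) ≤ (z i : ℚ) := by
        rw [← hz i]
        exact mul_nonneg (Nat.cast_nonneg D) (hx0 i)
      exact_mod_cast this
    have hxeq : (fun i => (((z i).toNat : ℕ) : ℚ)) = D • x := by
      funext i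
      rw [Pi.smul_apply, nsmul_eq_mul, hz i]
      exact_mod_cast congrArg (fun t : ℤ => (t : ℚ)) (Int.toNat_of_nonneg (hz0 i))
    rw [← hxeq]
    exact hnat _
  -- coordinate subgroups of ℤ (scaled by D)
  set H : Fin n → AddSubgroup ℤ := fun i =>
    { carrier := {k | ∃ x ∈ AddSubgroup.closure (N : Set (Fin n → ℚ)), x i = (k : ℚ) / D}
      zero_mem' := ⟨0, AddSubgroup.zero_mem _, by simp⟩
      add_mem' := by
        rintro a b ⟨x, hx, hxe⟩ ⟨y, hy, hye⟩
        exact ⟨x + y, AddSubgroup.add_mem _ hx hy, by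
          rw [Pi.add_apply, hxe, hye, ← add_div]; push_cast; ring⟩
      neg_mem' := by
        rintro a ⟨x, hx, hxe⟩
        exact ⟨-x, AddSubgroup.neg_mem _ hx, by
          rw [Pi.neg_apply, hxe]; push_cast; rw [neg_div]⟩ } with hHdef
  choose g hg using fun i => Int.subgroup_cyclic (H i)
  have hDH : ∀ i, (D : ℤ) ∈ H i := by
    intro i
    refine ⟨(fun j => (((if j = i then 1 else 0 : ℕ) : ℚ))),
      AddSubgroup.subset_closure (hnat fun j => if j = i then 1 else 0), ?_⟩
    simp [div_self hDQ]
  have hgdvd : ∀ i, g i ∣ (D : ℤ) := by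
    intro i
    have h1 := hDH i
    rw [hg i, AddSubgroup.mem_closure_singleton] at h1
    obtain ⟨t, ht⟩ := h1
    exact Dvd.intro t (by rw [← ht, smul_eq_mul, mul_comm])
  have hgne : ∀ i, g i ≠ 0 := by
    intro i h
    have := hgdvd i
    rw [h, zero_dvd_iff] at this
    exact hDpos.ne' (by exact_mod_cast this)
  have hadvd : ∀ i, (g i).natAbs ∣ D := by
    intro i
    have := Int.natAbs_dvd_natAbs.mpr (hgdvd i)
    simpa using this
  set m : Fin n → ℕ := fun i => D / (g i).natAbs with hmdef
  have hapos : ∀ i, 0 < (g i).natAbs := fun i => Int.natAbs_pos.mpr (hgne i)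
  have ham : ∀ i, (g i).natAbs * m i = D := fun i => Nat.mul_div_cancel' (hadvd i)
  have hmpos : ∀ i, 0 < m i :=
    fun i => Nat.div_pos (Nat.le_of_dvd hDpos (hadvd i)) (hapos i)
  have hmQ : ∀ i, ((m i : ℚ)) ≠ 0 := fun i => Nat.cast_ne_zero.mpr (hmpos i).ne'
  have hmemH : ∀ (i : Fin n) (k : ℤ), k ∈ H i ↔ (((g i).natAbs : ℤ)) ∣ k := by
    intro i k
    rw [hg i, AddSubgroup.mem_closure_singleton, Int.natAbs_dvd]
    constructor
    · rintro ⟨t, rfl⟩; exact Dvd.intro t (by rw [smul_eq_mul, mul_comm])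
    · rintro ⟨t, rfl⟩; exact ⟨t, by rw [smul_eq_mul, mul_comm]⟩
  -- the characterization of the coordinate images
  have hchar : ∀ i : Fin n, ∀ q : ℚ, (∃ x ∈ N, x i = q) ↔ ∃ k : ℕ, q = (k : ℚ) / m i := by
    intro i q
    constructor
    · rintro ⟨x, hxN, rfl⟩
      obtain ⟨z, hz⟩ := hNK x hxN i
      have hq0 : 0 ≤ x i := hpos x hxN i
      have hz0 : (0 : ℤ) ≤ z := by
        have : (0 : ℚ) ≤ (z : ℚ) := by
          rw [← hz]; exact mul_nonneg (Nat.cast_nonneg D) hq0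
        exact_mod_cast this
      have hzH : z ∈ H i := ⟨x, AddSubgroup.subset_closure hxN, by
        rw [eq_div_iff hDQ, mul_comm, hz]⟩
      rw [hmemH] at hzH
      obtain ⟨t, ht⟩ := hzH
      have hapos' : (0 : ℤ) < ((g i).natAbs : ℤ) := by exact_mod_cast hapos i
      have ht0 : 0 ≤ t := by nlinarith
      refine ⟨t.toNat, ?_⟩
      have hx' : x i = (z : ℚ) / D := by rw [eq_div_iff hDQ, mul_comm, hz]
      have keyZ : z * (m i : ℤ) = t * (D : ℤ) := by
        rw [ht, mul_comm (((g i).natAbs : ℤ)) t, mul_assoc]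
        congr 1
        exact_mod_cast ham i
      have htt : ((t.toNat : ℤ)) = t := Int.toNat_of_nonneg ht0
      rw [← htt] at keyZ
      rw [hx', div_eq_div_iff hDQ (hmQ i)]
      exact_mod_cast keyZ
    · rintro ⟨k, rfl⟩
      have haH : (((g i).natAbs : ℤ)) ∈ H i := (hmemH i _).mpr dvd_rfl
      obtain ⟨y, hy, hyi⟩ := haH
      have hyi' : y i = 1 / (m i : ℚ) := by
        rw [hyi, div_eq_div_iff hDQ (hmQ i), one_mul]
        exact_mod_cast ham i
      set c : Fin n → ℕ := fun j => if j = i then 0 else ⌈-((k • y) j)⌉₊ with hc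
      set x : Fin n → ℚ := k • y + (fun j => ((c j : ℚ))) with hxdef
      have hxcl : x ∈ AddSubgroup.closure (N : Set (Fin n → ℚ)) :=
        AddSubgroup.add_mem _ (AddSubgroup.nsmul_mem _ hy k)
          (AddSubgroup.subset_closure (hnat c))
      have hx0 : ∀ j, 0 ≤ x j := by
        intro j
        rw [hxdef]
        simp only [Pi.add_apply, Pi.smul_apply]
        by_cases hji : j = i
        · subst hji
          simp only [hc, if_pos rfl, Nat.cast_zero, add_zero, hyi', smul_eq_mul]
          positivity
        · have hle := Nat.le_ceil (-((k • y) j))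
          simp only [hc, if_neg hji]
          have : (k • y) j = k • (y j) := rfl
          push_cast
          linarith [hle]
      have hxN := L1 x hxcl hx0
      refine ⟨x, hxN, ?_⟩
      have hci : (c i : ℚ) = 0 := by simp [hc]
      have hxi : x i = (k : ℚ) * (1 / (m i : ℚ)) := by
        rw [hxdef, Pi.add_apply, hci, add_zero, Pi.smul_apply, hyi', nsmul_eq_mul]
      rw [hxi, mul_one_div]
  classical
  set M : AddSubmonoid (Fin n → ℚ) :=
    { carrier := {x | ∀ i, ∃ k : ℕ, x i = (k : ℚ) / m i}
      zero_mem' := fun i => ⟨0, by simp⟩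
      add_mem' := by
        rintro a b ha hb i
        obtain ⟨ka, hka⟩ := ha i
        obtain ⟨kb, hkb⟩ := hb i
        exact ⟨ka + kb, by
          rw [Pi.add_apply, hka, hkb]; push_cast; rw [← add_div]⟩ } with hMdef
  have hMmem : ∀ x : Fin n → ℚ, x ∈ M ↔ ∀ i, ∃ k : ℕ, x i = (k : ℚ) / m i := fun x => Iff.rfl
  refine ⟨m, hmpos, hchar, M, rfl, ⟨?_, ?_, ?_, ?_⟩, ?_⟩
  · -- finitely generated
    refine ⟨Finset.image (fun i => fun j => if j = i then ((m i : ℚ))⁻¹ else 0) Finset.univ, ?_⟩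
    apply le_antisymm
    · apply AddSubmonoid.closure_le.mpr
      intro v hv
      simp only [Finset.coe_image, Set.mem_image, Finset.mem_coe, Finset.coe_univ,
        Set.mem_univ] at hv
      obtain ⟨i, -, rfl⟩ := hv
      rw [SetLike.mem_coe, hMmem]
      intro j
      by_cases hji : j = i
      · subst hji
        exact ⟨1, by simp [one_div]⟩
      · exact ⟨0, by simp [hji]⟩
    · intro x hx
      have hx' : ∀ i, ∃ k : ℕ, x i = (k : ℚ) / m i := hx
      choose k hk using hx'
      have hxsum : x = ∑ i, (k i) • (fun j => if j = i then ((m i : ℚ))⁻¹ else 0) := by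
        funext j
        rw [Finset.sum_apply]
        have hterm : ∀ i, (k i • (fun j' => if j' = i then ((m i : ℚ))⁻¹ else 0)) j
            = if j = i then (k i : ℚ) * ((m i : ℚ))⁻¹ else 0 := by
          intro i
          by_cases hji : j = i <;> simp [hji]
        rw [Finset.sum_congr rfl fun i _ => hterm i, Finset.sum_ite_eq Finset.univ j
          (fun i => (k i : ℚ) * ((m i : ℚ))⁻¹), if_pos (Finset.mem_univ j), ← div_eq_mul_inv]
        exact hk j
      rw [hxsum]
      exact AddSubmonoid.sum_mem _ fun i _ => nsmul_mem
        (AddSubmonoid.subset_closure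
          (Finset.mem_coe.mpr (Finset.mem_image_of_mem _ (Finset.mem_univ i)))) (k i)
  · -- nonneg coordinates
    intro x hx i
    obtain ⟨k, hk⟩ := hx i
    rw [hk]
    positivity
  · -- contains the natural vectors
    intro v
    rw [hMmem]
    intro i
    refine ⟨v i * m i, ?_⟩
    push_cast
    rw [mul_div_assoc, div_self (hmQ i), mul_one]
  · -- saturated
    have hMK : ∀ x ∈ AddSubgroup.closure (M : Set (Fin n → ℚ)), ∀ i, ∃ z : ℤ, x i * m i = z := by
      set K2 : AddSubgroup (Fin n → ℚ) :=
        { carrier := {x | ∀ i, ∃ z : ℤ, x i * m i = z}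
          zero_mem' := fun i => ⟨0, by simp⟩
          add_mem' := by
            rintro a b ha hb i
            obtain ⟨za, hza⟩ := ha i
            obtain ⟨zb, hzb⟩ := hb i
            exact ⟨za + zb, by rw [Pi.add_apply, add_mul, hza, hzb]; push_cast; ring⟩
          neg_mem' := by
            rintro a ha i
            obtain ⟨z, hz⟩ := ha i
            exact ⟨-z, by rw [Pi.neg_apply, neg_mul, hz]; push_cast; ring⟩ } with hK2def
      intro x hx
      refine (AddSubgroup.closure_le K2).mpr ?_ hx
      intro a ha i
      obtain ⟨kk, hkk⟩ := ha i
      exact ⟨kk, by rw [hkk, div_mul_cancel₀ _ (hmQ i)]; push_cast; ring⟩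
    intro x hx p hp hpx
    rw [hMmem]
    intro i
    obtain ⟨kk, hkk⟩ := hpx i
    have hp' : (0 : ℚ) < p := by exact_mod_cast hp
    have h1 : (p : ℚ) * x i = (kk : ℚ) / m i := by
      rw [← hkk, Pi.smul_apply, nsmul_eq_mul]
    have hxi0 : 0 ≤ x i := by
      have h2 : (0 : ℚ) ≤ (p : ℚ) * x i := by rw [h1]; positivity
      nlinarith
    obtain ⟨z, hz⟩ := hMK x hx i
    have hz0 : (0 : ℤ) ≤ z := by
      have : (0 : ℚ) ≤ (z : ℚ) := by
        rw [← hz]; exact mul_nonneg hxi0 (Nat.cast_nonneg _)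
      exact_mod_cast this
    refine ⟨z.toNat, ?_⟩
    rw [eq_div_iff (hmQ i), hz]
    exact_mod_cast (Int.toNat_of_nonneg hz0).symm
  · -- N ≤ M
    intro x hx
    rw [hMmem]
    intro i
    exact (hchar i (x i)).mp ⟨x, hx, rfl⟩
end

section
/- Let P be the commutative monoid generated by four elements a₁, b₁, a₂, b₂ subject to the single relation a₁ + b₁ = a₂ + b₂, and let ρ: P → M be a homomorphism to an integral (cancellative) sharp commutative monoid. If the ideal of M generated by ρ(a₁) and ρ(a₂) is principal, then the ideal of M generated by ρ(b₁) and ρ(b₂) is also principal. -/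
/-- Let `P` be the commutative monoid generated by `a₁, b₁, a₂, b₂` with the single relation
`a₁ + b₁ = a₂ + b₂`.  A homomorphism `ρ : P → M` to an integral (cancellative) sharp
commutative monoid amounts to elements `α₁, β₁, α₂, β₂ ∈ M` with `α₁ + β₁ = α₂ + β₂`.
If the ideal of `M` generated by `α₁, α₂` is principal, then so is the ideal generated by
`β₁, β₂`. -/
theorem principal_ideal_transfer {M : Type*} [AddCancelCommMonoid M]
    (hsharp : ∀ a b : M, a + b = 0 → a = 0)
    (α₁ β₁ α₂ β₂ : M) (hrel : α₁ + β₁ = α₂ + β₂)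
    (h : ∃ m : M, ∀ z : M,
      ((∃ w, z = α₁ + w) ∨ (∃ w, z = α₂ + w)) ↔ ∃ w, z = m + w) :
    ∃ m : M, ∀ z : M,
      ((∃ w, z = β₁ + w) ∨ (∃ w, z = β₂ + w)) ↔ ∃ w, z = m + w := by
  obtain ⟨m, hm⟩ := h
  have hmem : (∃ w, m = α₁ + w) ∨ (∃ w, m = α₂ + w) :=
    (hm m).mpr ⟨0, by simp⟩
  rcases hmem with ⟨u, hu⟩ | ⟨u, hu⟩
  · -- m = α₁ + u, and α₁ = m + w₁ forces u = 0, so m = α₁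
    obtain ⟨w₁, hw₁⟩ := (hm α₁).mp (Or.inl ⟨0, by simp⟩)
    have h0 : u + w₁ = 0 := by
      have : α₁ + 0 = α₁ + (u + w₁) := by
        rw [add_zero, ← add_assoc, ← hu, ← hw₁]
      exact (add_left_cancel this).symm
    have hu0 : u = 0 := hsharp u w₁ h0
    have hmα : m = α₁ := by rw [hu, hu0, add_zero]
    obtain ⟨c, hc⟩ := (hm α₂).mp (Or.inr ⟨0, by simp⟩)
    rw [hmα] at hc
    -- β₁ = c + β₂
    have hβ : β₁ = c + β₂ := by
      apply add_left_cancel (a := α₁)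
      rw [hrel, hc]; abel
    refine ⟨β₂, fun z => ⟨?_, fun ⟨w, hw⟩ => Or.inr ⟨w, hw⟩⟩⟩
    rintro (⟨w, hw⟩ | ⟨w, hw⟩)
    · exact ⟨c + w, by rw [hw, hβ]; simp [add_comm, add_left_comm]⟩
    · exact ⟨w, hw⟩
  · obtain ⟨w₁, hw₁⟩ := (hm α₂).mp (Or.inr ⟨0, by simp⟩)
    have h0 : u + w₁ = 0 := by
      have : α₂ + 0 = α₂ + (u + w₁) := by
        rw [add_zero, ← add_assoc, ← hu, ← hw₁]
      exact (add_left_cancel this).symm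
    have hu0 : u = 0 := hsharp u w₁ h0
    have hmα : m = α₂ := by rw [hu, hu0, add_zero]
    obtain ⟨c, hc⟩ := (hm α₁).mp (Or.inl ⟨0, by simp⟩)
    rw [hmα] at hc
    have hβ : β₂ = c + β₁ := by
      apply add_left_cancel (a := α₂)
      rw [← hrel, hc]; abel
    refine ⟨β₁, fun z => ⟨?_, fun ⟨w, hw⟩ => Or.inl ⟨w, hw⟩⟩⟩
    rintro (⟨w, hw⟩ | ⟨w, hw⟩)
    · exact ⟨w, hw⟩
    · exact ⟨c + w, by rw [hw, hβ]; simp [add_comm, add_left_comm]⟩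
end

section
/- Let D be a local monoid: a fine, sharp, integral commutative monoid equipped with an integral inclusion ℕ ↪ D such that D^{gp}/ℤ is a finite abelian group X. Then for each θ ∈ X there is a unique minimal lift e^θ ∈ D of θ, and the map ℕ × X → D sending (a, θ) to a·1 + e^θ is a bijection of sets. -/
/-- Let `D` be a *local monoid*: a fine (finitely generated, cancellative) sharp commutative
monoid with an integral injective inclusion `ℕ ↪ D`, `m ↦ m • u`, such that `D^{gp}/ℤ` is
finite.  (Two elements `d, d'` of `D` have the same class in `X = D^{gp}/ℤ` iff
`d + a•u = d' + b•u` for some `a, b ∈ ℕ`; finiteness of `X` is encoded by finiteness of the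
set of such classes of elements of `D`, which generate `X`.)  Then every class has a unique
minimal lift `e` in `D` (every element of the class is uniquely `e + a•u`, `a ∈ ℕ`), and the
resulting map `ℕ × X → D`, `(a, θ) ↦ a•u + e^θ`, is a bijection: every `d ∈ D` is uniquely
`e + a•u` with `e` a minimal lift. -/
theorem local_monoid_minimal_lifts {D : Type*} [AddCancelCommMonoid D]
    (hfg : ∃ S : Finset D, AddSubmonoid.closure (S : Set D) = ⊤)
    (hsharp : ∀ a b : D, a + b = 0 → a = 0)
    (u : D)
    (hinj : ∀ a b : ℕ, a • u = b • u → a = b)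
    (hint : ∀ (a₁ a₂ : ℕ) (q₁ q₂ : D), a₁ • u + q₁ = a₂ • u + q₂ →
      ∃ (b₁ b₂ : ℕ) (q : D), q₁ = b₂ • u + q ∧ q₂ = b₁ • u + q ∧ a₁ + b₁ = a₂ + b₂)
    (hfin : ∃ T : Finset D, ∀ d : D, ∃ t ∈ T, ∃ a b : ℕ, d + a • u = t + b • u) :
    (∀ d : D, ∃! e : D,
      (∃ a b : ℕ, e + a • u = d + b • u) ∧
      (∀ d' : D, (∃ a b : ℕ, d' + a • u = e + b • u) → ∃! a : ℕ, d' = e + a • u)) ∧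
    (∀ d : D, ∃! p : D × ℕ,
      (∀ d' : D, (∃ a b : ℕ, d' + a • u = p.1 + b • u) → ∃! a : ℕ, d' = p.1 + a • u) ∧
      d = p.1 + p.2 • u) := by
  classical
  obtain ⟨S, hS⟩ := hfg
  -- every element is a linear combination of generators
  have hrep : ∀ d : D, ∃ f : S → ℕ, ∑ s : S, f s • (s : D) = d := by
    intro d
    have hd : d ∈ AddSubmonoid.closure (S : Set D) := by rw [hS]; trivial
    induction hd using AddSubmonoid.closure_induction with
    | mem x hx =>
      refine ⟨fun s => if s = ⟨x, hx⟩ then 1 else 0, ?_⟩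
      rw [Finset.sum_eq_single (⟨x, hx⟩ : S)]
      · simp
      · intro b _ hb; simp [hb]
      · simp
    | zero => exact ⟨fun _ => 0, by simp⟩
    | add x y hx hy ihx ihy =>
      obtain ⟨f, hf⟩ := ihx
      obtain ⟨g, hg⟩ := ihy
      refine ⟨f + g, ?_⟩
      simp only [Pi.add_apply, add_smul, Finset.sum_add_distrib]
      rw [hf, hg]
  have hzero : ∀ a : ℕ, a • u = 0 → a = 0 := by
    intro a h
    exact hinj a 0 (by simpa using h)
  -- Dickson's lemma
  have dick : ∀ v : ℕ → (S → ℕ), ∃ m n, m < n ∧ ∀ s, v m s ≤ v n s := by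
    intro v
    have h : @WellQuasiOrdered (S → ℕ) (· ≤ ·) := wellQuasiOrdered_le
    obtain ⟨m, n, h1, h2⟩ := h v
    exact ⟨m, n, h1, fun s => h2 s⟩
  -- no infinite descent: the set of `a` with `∃ e, e + a•u = d` is bounded
  have hdesc : ∀ d : D, ∃ N : ℕ, ∀ a : ℕ, (∃ e : D, e + a • u = d) → a ≤ N := by
    intro d
    by_contra hcon
    push_neg at hcon
    have hall : ∀ n : ℕ, ∃ e : D, e + n • u = d := by
      intro n
      obtain ⟨a, ⟨e, he⟩, hlt⟩ := hcon n
      refine ⟨e + (a - n) • u, ?_⟩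
      rw [add_assoc, ← add_nsmul, Nat.sub_add_cancel hlt.le, he]
    choose e he using hall
    choose v hv using fun n => hrep (e n)
    obtain ⟨m, n, hmn, hle⟩ := dick v
    have hsum : e n = e m + ∑ s : S, (v n s - v m s) • (s : D) := by
      rw [← hv n, ← hv m, ← Finset.sum_add_distrib]
      refine Finset.sum_congr rfl fun s _ => ?_
      rw [← add_smul, Nat.add_sub_cancel' (hle s)]
    set c := ∑ s : S, (v n s - v m s) • (s : D) with hc
    have h1 : e m + m • u = e m + (c + n • u) := by
      rw [← add_assoc, ← hsum, he n, he m]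
    have h2 : m • u = c + n • u := add_left_cancel h1
    have h3 : m • u = (c + (n - m) • u) + m • u := by
      rw [add_assoc, ← add_nsmul, Nat.sub_add_cancel hmn.le]; exact h2
    have h4 : c + (n - m) • u = 0 := by
      have h0 : (0 : D) + m • u = (c + (n - m) • u) + m • u := by rw [zero_add]; exact h3
      exact (add_right_cancel h0).symm
    have h5 : (n - m) • u = 0 := hsharp _ _ (by rwa [add_comm] at h4)
    have := hzero _ h5
    omega
  -- key construction: minimal lift below each `d`
  have key : ∀ d : D, ∃ (e : D) (a₀ : ℕ), e + a₀ • u = d ∧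
      (∀ d' : D, (∃ a b : ℕ, d' + a • u = e + b • u) → ∃! a : ℕ, d' = e + a • u) := by
    intro d
    obtain ⟨N, hN⟩ := hdesc d
    set P : ℕ → Prop := fun a => ∃ e : D, e + a • u = d with hP
    have hP0 : P 0 := ⟨d, by simp⟩
    set a₀ := Nat.findGreatest P N with ha₀
    have hPa₀ : P a₀ := Nat.findGreatest_spec (hN 0 hP0) hP0
    have hmax : ∀ a : ℕ, P a → a ≤ a₀ := fun a pa => Nat.le_findGreatest (hN a pa) pa
    obtain ⟨e, he⟩ := hPa₀
    refine ⟨e, a₀, he, ?_⟩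
    rintro d' ⟨a, b, hab⟩
    have hab' : a • u + d' = b • u + e := by rw [add_comm (a • u), add_comm (b • u)]; exact hab
    obtain ⟨b₁, b₂, q, hq1, hq2, hsum⟩ := hint a b d' e hab'
    have hPq : P (b₁ + a₀) := by
      refine ⟨q, ?_⟩
      rw [add_nsmul, ← add_assoc, ← add_comm (b₁ • u) q, ← hq2, he]
    have hb₁ : b₁ = 0 := by have := hmax _ hPq; omega
    have heq : e = q := by rw [hq2, hb₁, zero_nsmul, zero_add]
    refine ⟨b₂, ?_, ?_⟩
    · rw [hq1, heq, add_comm]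
    · intro y hy
      have : e + b₂ • u = e + y • u := by
        rw [← hy, hq1, heq, add_comm]
      exact (hinj b₂ y (add_left_cancel this)).symm
  -- minimal lifts of equivalent elements are equal
  have huniq : ∀ e e' : D,
      (∀ d' : D, (∃ a b : ℕ, d' + a • u = e + b • u) → ∃! a : ℕ, d' = e + a • u) →
      (∀ d' : D, (∃ a b : ℕ, d' + a • u = e' + b • u) → ∃! a : ℕ, d' = e' + a • u) →
      (∃ a b : ℕ, e + a • u = e' + b • u) → e = e' := by
    intro e e' hm hm' ⟨a, b, hab⟩
    obtain ⟨c, hc, -⟩ := hm' e ⟨a, b, hab⟩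
    obtain ⟨c', hc', -⟩ := hm e' ⟨b, a, hab.symm⟩
    have : e + 0 • u = e + (c' + c) • u := by
      rw [zero_nsmul, add_zero, add_nsmul, ← add_assoc, ← hc', ← hc]
    have hcc : 0 = c' + c := hinj 0 (c' + c) (add_left_cancel this)
    have hc0 : c = 0 := by omega
    rw [hc, hc0, zero_nsmul, add_zero]
  constructor
  · intro d
    obtain ⟨e, a₀, he, hmin⟩ := key d
    refine ⟨e, ⟨⟨a₀, 0, by rw [he, zero_nsmul, add_zero]⟩, hmin⟩, ?_⟩
    rintro e' ⟨⟨a', b', h'⟩, hmin'⟩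
    refine huniq e' e hmin' hmin ⟨a', a₀ + b', ?_⟩
    rw [h', ← he, add_nsmul, ← add_assoc]
  · intro d
    obtain ⟨e, a₀, he, hmin⟩ := key d
    refine ⟨(e, a₀), ⟨hmin, he.symm⟩, ?_⟩
    rintro ⟨e', a'⟩ ⟨hmin', hd⟩
    dsimp only at hmin' hd ⊢
    have hee : e' = e := huniq e' e hmin' hmin ⟨a', a₀, by rw [← hd, he]⟩
    have haa : a' = a₀ := by
      have h6 : e + a' • u = d := by rw [← hee]; exact hd.symm
      have h7 : e + a' • u = e + a₀ • u := by rw [h6, ← he]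
      exact hinj a' a₀ (add_left_cancel h7)
    rw [hee, haa]
end

section
/- A local monoid structure on the set ℕ × X for a finite abelian group X is equivalent to a family of natural numbers (c_{θ,θ'})_{θ,θ' ∈ X} satisfying: (1) c_{0,θ} = 0 for all θ; (2) c_{θ,θ'} = c_{θ',θ}; (3) c_{θ,θ'} + c_{θ+θ',θ''} = c_{θ,θ'+θ''} + c_{θ',θ''}; and then the binary operation (a,θ) + (a',θ') = (a + a' + c_{θ,θ'}, θ + θ') makes ℕ × X a commutative monoid with identity (0,0); this monoid is sharp if and only if additionally c_{θ,−θ} ≠ 0 for all θ ≠ 0. -/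
/-- The binary operation on `ℕ × X` attached to a symmetric `ℕ`-valued 2-cocycle `c` on a
finite abelian group `X`: `(a, θ) + (a', θ') = (a + a' + c θ θ', θ + θ')`. -/
def cocycleAdd {X : Type*} [AddCommGroup X] (c : X → X → ℕ) (p q : ℕ × X) : ℕ × X :=
  (p.1 + q.1 + c p.2 q.2, p.2 + q.2)

/-- Given a family `(c_{θ,θ'})` of natural numbers satisfying (1) `c_{0,θ} = 0`,
(2) symmetry and (3) the cocycle identity, the operation
`(a,θ) + (a',θ') = (a + a' + c_{θ,θ'}, θ + θ')` makes `ℕ × X` a commutative monoid with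
identity `(0,0)`; and this monoid is sharp (its only unit is `(0,0)`) if and only if
`c_{θ,−θ} ≠ 0` for every `θ ≠ 0`. -/
theorem cocycle_gives_local_monoid {X : Type*} [AddCommGroup X] [Fintype X]
    (c : X → X → ℕ)
    (h1 : ∀ θ : X, c 0 θ = 0)
    (h2 : ∀ θ θ' : X, c θ θ' = c θ' θ)
    (h3 : ∀ θ θ' θ'' : X, c θ θ' + c (θ + θ') θ'' = c θ (θ' + θ'') + c θ' θ'') :
    (∀ p q : ℕ × X, cocycleAdd c p q = cocycleAdd c q p) ∧
    (∀ p q r : ℕ × X, cocycleAdd c (cocycleAdd c p q) r = cocycleAdd c p (cocycleAdd c q r)) ∧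
    (∀ p : ℕ × X, cocycleAdd c (0, 0) p = p) ∧
    ((∀ p q : ℕ × X, cocycleAdd c p q = (0, 0) → p = (0, 0)) ↔
      ∀ θ : X, θ ≠ 0 → c θ (-θ) ≠ 0) := by
  refine ⟨fun p q => ?_, fun p q r => ?_, fun p => ?_, ?_⟩
  · simp [cocycleAdd, h2 p.2 q.2, add_comm]
  · have := h3 p.2 q.2 r.2
    refine Prod.ext ?_ (add_assoc _ _ _)
    simp only [cocycleAdd]
    omega
  · simp [cocycleAdd, h1]
  · constructor
    · intro hs θ hθ hc
      have := hs (0, θ) (0, -θ) (by simp [cocycleAdd, hc])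
      exact hθ (by simpa using congrArg Prod.snd this)
    · intro hc p q h
      have e1 : p.1 + q.1 + c p.2 q.2 = 0 := congrArg Prod.fst h
      have e2 : p.2 + q.2 = 0 := congrArg Prod.snd h
      have hq : q.2 = -p.2 := by linear_combination (norm := abel) e2
      by_cases hp : p.2 = 0
      · refine Prod.ext ?_ hp
        omega
      · exact absurd (by omega : c p.2 q.2 = 0) (hq ▸ hc p.2 hp)
end
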